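/- In the 3+3 product model on ℝ⁶ with equal sectional curvatures μ = λ (an Einstein model), the trace-free Schouten tensor E vanishes, L₁ = 0, L₂ = −(288/25)λ³, and L₃ = (144/25)λ³; in particular L₂ = −2L₃. -/
import Mathlib


open Finset

/-- Kulkarni–Nomizu product of two 2-tensors: (S∧T)_{ijkl}. -/
def KN {n : ℕ} (S T : Fin n → Fin n → ℝ) : Fin n → Fin n → Fin n → Fin n → ℝ :=
  fun i j k l => S i k * T j l + S j l * T i k - S i l * T j k - S j k * T i l

/-- Composition of 2-tensors (as endomorphisms, indices raised by the standard metric). -/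
noncomputable def comp2 {n : ℕ} (S T : Fin n → Fin n → ℝ) : Fin n → Fin n → ℝ :=
  fun i j => ∑ u, S i u * T u j

/-- Composition of curvature-type 4-tensors: (A∘B)_{ijkl} = (1/2) A_{ij}^{uv} B_{uvkl}. -/
noncomputable def comp4 {n : ℕ} (A B : Fin n → Fin n → Fin n → Fin n → ℝ) :
    Fin n → Fin n → Fin n → Fin n → ℝ :=
  fun i j k l => (1 / 2 : ℝ) * ∑ u, ∑ v, A i j u v * B u v k l

/-- Partial (Ricci-type) trace of a 4-tensor: (tr A)_{ij} = A_{iuj}^{u}. -/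
noncomputable def ptr {n : ℕ} (A : Fin n → Fin n → Fin n → Fin n → ℝ) :
    Fin n → Fin n → ℝ :=
  fun i j => ∑ u, A i u j u

/-- Full trace of a 2-tensor. -/
noncomputable def tr2 {n : ℕ} (S : Fin n → Fin n → ℝ) : ℝ := ∑ i, S i i

/-- Inner product of 2-tensors (standard metric). -/
noncomputable def inner2 {n : ℕ} (S T : Fin n → Fin n → ℝ) : ℝ := ∑ i, ∑ j, S i j * T i j

/-- The first-factor metric on ℝ^m ⊕ ℝ^{6-m} ≅ ℝ⁶, extended by zero. -/
def g6 (m : ℕ) : Fin 6 → Fin 6 → ℝ := fun i j => if i = j ∧ (i : ℕ) < m then 1 else 0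

/-- The second-factor metric on ℝ^m ⊕ ℝ^{6-m} ≅ ℝ⁶, extended by zero. -/
def h6 (m : ℕ) : Fin 6 → Fin 6 → ℝ := fun i j => if i = j ∧ m ≤ (i : ℕ) then 1 else 0

/-- The standard inner product ḡ on ℝ⁶. -/
def gb6 : Fin 6 → Fin 6 → ℝ := fun i j => if i = j then 1 else 0

/-- Curvature model of a product of spaceforms of dimensions m and 6−m with
sectional curvatures μ and ν: R = (μ/2) g∧g + (ν/2) h∧h. -/
noncomputable def Rm (m : ℕ) (μ ν : ℝ) : Fin 6 → Fin 6 → Fin 6 → Fin 6 → ℝ :=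
  fun i j k l => (μ / 2) * KN (g6 m) (g6 m) i j k l + (ν / 2) * KN (h6 m) (h6 m) i j k l

/-- J = tr_ḡ(Ric)/10 in dimension six. -/
noncomputable def Jm (m : ℕ) (μ ν : ℝ) : ℝ := tr2 (ptr (Rm m μ ν)) / 10

/-- Schouten tensor P = (Ric − Jḡ)/4 in dimension six. -/
noncomputable def Pm (m : ℕ) (μ ν : ℝ) : Fin 6 → Fin 6 → ℝ :=
  fun i j => (ptr (Rm m μ ν) i j - Jm m μ ν * gb6 i j) / 4

/-- Trace-free Schouten tensor E = P − (J/6)ḡ. -/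
noncomputable def Em (m : ℕ) (μ ν : ℝ) : Fin 6 → Fin 6 → ℝ :=
  fun i j => Pm m μ ν i j - (Jm m μ ν / 6) * gb6 i j

/-- Weyl tensor W = R − P∧ḡ. -/
noncomputable def Wm (m : ℕ) (μ ν : ℝ) : Fin 6 → Fin 6 → Fin 6 → Fin 6 → ℝ :=
  fun i j k l => Rm m μ ν i j k l - KN (Pm m μ ν) gb6 i j k l

/-- W² = W∘W. -/
noncomputable def W2m (m : ℕ) (μ ν : ℝ) := comp4 (Wm m μ ν) (Wm m μ ν)

/-- W³ = W∘W∘W. -/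
noncomputable def W3m (m : ℕ) (μ ν : ℝ) := comp4 (Wm m μ ν) (W2m m μ ν)

/-- Q = −(40/9)J³ + 16J|E|² − 16 tr E³ − 8 W_{ijkl}E^{ik}E^{jl}. -/
noncomputable def Qm (m : ℕ) (μ ν : ℝ) : ℝ :=
  -(40 / 9) * (Jm m μ ν) ^ 3 + 16 * Jm m μ ν * inner2 (Em m μ ν) (Em m μ ν)
    - 16 * tr2 (comp2 (Em m μ ν) (comp2 (Em m μ ν) (Em m μ ν)))
    - 8 * ∑ i, ∑ j, ∑ k, ∑ l, Wm m μ ν i j k l * Em m μ ν i k * Em m μ ν j l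

/-- L₁ = 96⟨E, tr W²⟩. -/
noncomputable def L1m (m : ℕ) (μ ν : ℝ) : ℝ := 96 * inner2 (Em m μ ν) (ptr (W2m m μ ν))

/-- L₂ = 16⟨E, tr W²⟩ − (4/3) J tr² W². -/
noncomputable def L2m (m : ℕ) (μ ν : ℝ) : ℝ :=
  16 * inner2 (Em m μ ν) (ptr (W2m m μ ν)) - (4 / 3) * Jm m μ ν * tr2 (ptr (W2m m μ ν))

/-- L₃ = 4 tr² W³. -/
noncomputable def L3m (m : ℕ) (μ ν : ℝ) : ℝ := 4 * tr2 (ptr (W3m m μ ν))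

/-! ### Auxiliary lemmas -/

lemma raw_comp {n : ℕ} (S T U V : Fin n → Fin n → ℝ) (i j k l : Fin n) :
    ∑ u, ∑ v, KN S T i j u v * KN U V u v k l
      = 2 * (KN (comp2 S U) (comp2 T V) i j k l + KN (comp2 S V) (comp2 T U) i j k l) := by
  have h1 : ∀ u v : Fin n, KN S T i j u v * KN U V u v k l =
      (S i u * U u k) * (T j v * V v l)
    + (S i u * V u k) * (T j v * U v l)
    - (S i u * U u l) * (T j v * V v k)
    - (S i u * V u l) * (T j v * U v k)
    + (T i u * U u k) * (S j v * V v l)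
    + (T i u * V u k) * (S j v * U v l)
    - (T i u * U u l) * (S j v * V v k)
    - (T i u * V u l) * (S j v * U v k)
    - (T j u * U u k) * (S i v * V v l)
    - (T j u * V u k) * (S i v * U v l)
    + (T j u * U u l) * (S i v * V v k)
    + (T j u * V u l) * (S i v * U v k)
    - (S j u * U u k) * (T i v * V v l)
    - (S j u * V u k) * (T i v * U v l)
    + (S j u * U u l) * (T i v * V v k)
    + (S j u * V u l) * (T i v * U v k) := by
    intro u v; simp only [KN]; ring
  simp only [h1, Finset.sum_add_distrib, Finset.sum_sub_distrib, ← Finset.sum_mul_sum]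
  simp only [KN, comp2]
  ring

lemma ptr_KN {n : ℕ} (S T : Fin n → Fin n → ℝ) (i j : Fin n) :
    ptr (KN S T) i j = tr2 T * S i j + tr2 S * T i j - comp2 S T i j - comp2 T S i j := by
  have h1 : ∀ u : Fin n, KN S T i u j u =
      S i j * T u u + S u u * T i j - S i u * T u j - T i u * S u j := by
    intro u; simp only [KN]; ring
  simp only [ptr, h1, Finset.sum_add_distrib, Finset.sum_sub_distrib, ← Finset.mul_sum,
    ← Finset.sum_mul]
  simp only [tr2, comp2]
  ring

lemma hgb : ∀ i j, gb6 i j = g6 3 i j + h6 3 i j := by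
  intro i j
  fin_cases i <;> fin_cases j <;>
    simp (config := { decide := true }) [gb6, g6, h6]

lemma hgg : ∀ i j, comp2 (g6 3) (g6 3) i j = g6 3 i j := by
  intro i j
  fin_cases i <;> fin_cases j <;>
    simp (config := { decide := true }) [comp2, g6, Fin.sum_univ_six]

lemma hhh : ∀ i j, comp2 (h6 3) (h6 3) i j = h6 3 i j := by
  intro i j
  fin_cases i <;> fin_cases j <;>
    simp (config := { decide := true }) [comp2, h6, Fin.sum_univ_six]

lemma hgh : ∀ i j, comp2 (g6 3) (h6 3) i j = 0 := by
  intro i j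
  fin_cases i <;> fin_cases j <;>
    simp (config := { decide := true }) [comp2, g6, h6, Fin.sum_univ_six]

lemma hhg : ∀ i j, comp2 (h6 3) (g6 3) i j = 0 := by
  intro i j
  fin_cases i <;> fin_cases j <;>
    simp (config := { decide := true }) [comp2, g6, h6, Fin.sum_univ_six]

lemma htrg : tr2 (g6 3) = 3 := by
  simp (config := { decide := true }) only [tr2, g6, Fin.sum_univ_six]
  norm_num

lemma htrh : tr2 (h6 3) = 3 := by
  simp (config := { decide := true }) only [tr2, h6, Fin.sum_univ_six]
  norm_num

lemma hRic (lam : ℝ) : ∀ i j, ptr (Rm 3 lam lam) i j = 2 * lam * gb6 i j := by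
  intro i j
  simp only [ptr, Rm, Finset.sum_add_distrib, ← Finset.mul_sum]
  rw [show (∑ u, KN (g6 3) (g6 3) i u j u) = ptr (KN (g6 3) (g6 3)) i j from rfl,
      show (∑ u, KN (h6 3) (h6 3) i u j u) = ptr (KN (h6 3) (h6 3)) i j from rfl,
      ptr_KN, ptr_KN, htrg, htrh, hgg i j, hhh i j, hgb i j]
  ring

lemma hJ (lam : ℝ) : Jm 3 lam lam = (6 / 5) * lam := by
  simp only [Jm, tr2, hRic]
  simp (config := { decide := true }) [gb6, Fin.sum_univ_six]
  ring

lemma hP (lam : ℝ) : ∀ i j, Pm 3 lam lam i j = (lam / 5) * gb6 i j := by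
  intro i j; simp only [Pm, hRic, hJ]; ring

lemma hE (lam : ℝ) : ∀ i j, Em 3 lam lam i j = 0 := by
  intro i j; simp only [Em, hP, hJ]; ring

noncomputable def wt : Fin 6 → Fin 6 → Fin 6 → Fin 6 → ℝ := fun i j k l =>
  (3 / 10) * KN (g6 3) (g6 3) i j k l + (3 / 10) * KN (h6 3) (h6 3) i j k l
    - (2 / 5) * KN (g6 3) (h6 3) i j k l

lemma hW (lam : ℝ) : ∀ i j k l, Wm 3 lam lam i j k l = lam * wt i j k l := by
  intro i j k l
  simp only [Wm, Rm, wt, KN, hP, hgb]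
  ring

lemma hWW : ∀ i j k l,
    (∑ u, ∑ v, wt i j u v * wt u v k l)
      = (9 / 25) * (KN (g6 3) (g6 3) i j k l + KN (h6 3) (h6 3) i j k l)
        + (8 / 25) * KN (g6 3) (h6 3) i j k l := by
  intro i j k l
  have h1 : ∀ u v : Fin 6, wt i j u v * wt u v k l =
      (9/100) * (KN (g6 3) (g6 3) i j u v * KN (g6 3) (g6 3) u v k l)
    + (9/100) * (KN (g6 3) (g6 3) i j u v * KN (h6 3) (h6 3) u v k l)
    - (3/25) * (KN (g6 3) (g6 3) i j u v * KN (g6 3) (h6 3) u v k l)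
    + (9/100) * (KN (h6 3) (h6 3) i j u v * KN (g6 3) (g6 3) u v k l)
    + (9/100) * (KN (h6 3) (h6 3) i j u v * KN (h6 3) (h6 3) u v k l)
    - (3/25) * (KN (h6 3) (h6 3) i j u v * KN (g6 3) (h6 3) u v k l)
    - (3/25) * (KN (g6 3) (h6 3) i j u v * KN (g6 3) (g6 3) u v k l)
    - (3/25) * (KN (g6 3) (h6 3) i j u v * KN (h6 3) (h6 3) u v k l)
    + (4/25) * (KN (g6 3) (h6 3) i j u v * KN (g6 3) (h6 3) u v k l) := by
    intro u v; simp only [wt]; ring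
  simp only [h1, Finset.sum_add_distrib, Finset.sum_sub_distrib, ← Finset.mul_sum]
  simp only [raw_comp]
  simp only [KN, hgg, hhh, hgh, hhg]
  ring

lemma hW2 (lam : ℝ) : ∀ i j k l, W2m 3 lam lam i j k l =
    lam ^ 2 * ((9 / 50) * (KN (g6 3) (g6 3) i j k l + KN (h6 3) (h6 3) i j k l)
      + (4 / 25) * KN (g6 3) (h6 3) i j k l) := by
  intro i j k l
  simp only [W2m, comp4, hW]
  have h2 : ∀ u v : Fin 6, (lam * wt i j u v) * (lam * wt u v k l)
      = lam ^ 2 * (wt i j u v * wt u v k l) := by intro u v; ring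
  simp only [h2, ← Finset.mul_sum]
  rw [hWW]; ring

lemma hWG : ∀ i j k l,
    (∑ u, ∑ v, wt i j u v *
      ((9 / 50) * (KN (g6 3) (g6 3) u v k l + KN (h6 3) (h6 3) u v k l)
        + (4 / 25) * KN (g6 3) (h6 3) u v k l))
      = (27 / 125) * (KN (g6 3) (g6 3) i j k l + KN (h6 3) (h6 3) i j k l)
        - (16 / 125) * KN (g6 3) (h6 3) i j k l := by
  intro i j k l
  have h1 : ∀ u v : Fin 6, wt i j u v *
      ((9 / 50) * (KN (g6 3) (g6 3) u v k l + KN (h6 3) (h6 3) u v k l)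
        + (4 / 25) * KN (g6 3) (h6 3) u v k l) =
      (27/500) * (KN (g6 3) (g6 3) i j u v * KN (g6 3) (g6 3) u v k l)
    + (27/500) * (KN (g6 3) (g6 3) i j u v * KN (h6 3) (h6 3) u v k l)
    + (6/125) * (KN (g6 3) (g6 3) i j u v * KN (g6 3) (h6 3) u v k l)
    + (27/500) * (KN (h6 3) (h6 3) i j u v * KN (g6 3) (g6 3) u v k l)
    + (27/500) * (KN (h6 3) (h6 3) i j u v * KN (h6 3) (h6 3) u v k l)
    + (6/125) * (KN (h6 3) (h6 3) i j u v * KN (g6 3) (h6 3) u v k l)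
    - (9/125) * (KN (g6 3) (h6 3) i j u v * KN (g6 3) (g6 3) u v k l)
    - (9/125) * (KN (g6 3) (h6 3) i j u v * KN (h6 3) (h6 3) u v k l)
    - (8/125) * (KN (g6 3) (h6 3) i j u v * KN (g6 3) (h6 3) u v k l) := by
    intro u v; simp only [wt]; ring
  simp only [h1, Finset.sum_add_distrib, Finset.sum_sub_distrib, ← Finset.mul_sum]
  simp only [raw_comp]
  simp only [KN, hgg, hhh, hgh, hhg]
  ring

lemma hW3 (lam : ℝ) : ∀ i j k l, W3m 3 lam lam i j k l =
    lam ^ 3 * ((1 / 2) * ((27 / 125) * (KN (g6 3) (g6 3) i j k l + KN (h6 3) (h6 3) i j k l)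
      - (16 / 125) * KN (g6 3) (h6 3) i j k l)) := by
  intro i j k l
  simp only [W3m, comp4, hW, hW2]
  have h3 : ∀ u v : Fin 6, (lam * wt i j u v) *
      (lam ^ 2 * ((9 / 50) * (KN (g6 3) (g6 3) u v k l + KN (h6 3) (h6 3) u v k l)
        + (4 / 25) * KN (g6 3) (h6 3) u v k l))
      = lam ^ 3 * (wt i j u v *
          ((9 / 50) * (KN (g6 3) (g6 3) u v k l + KN (h6 3) (h6 3) u v k l)
            + (4 / 25) * KN (g6 3) (h6 3) u v k l)) := by intro u v; ring
  simp only [h3, ← Finset.mul_sum]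
  rw [hWG]; ring

lemma hptrW2 (lam : ℝ) : ∀ i j, ptr (W2m 3 lam lam) i j
    = lam ^ 2 * (6 / 5) * (g6 3 i j + h6 3 i j) := by
  intro i j
  simp only [ptr, hW2, ← Finset.mul_sum, Finset.sum_add_distrib]
  rw [show (∑ u, KN (g6 3) (g6 3) i u j u) = ptr (KN (g6 3) (g6 3)) i j from rfl,
      show (∑ u, KN (h6 3) (h6 3) i u j u) = ptr (KN (h6 3) (h6 3)) i j from rfl,
      show (∑ u, KN (g6 3) (h6 3) i u j u) = ptr (KN (g6 3) (h6 3)) i j from rfl,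
      ptr_KN, ptr_KN, ptr_KN, htrg, htrh, hgg i j, hhh i j, hgh i j, hhg i j]
  ring

lemma hptrW3 (lam : ℝ) : ∀ i j, ptr (W3m 3 lam lam) i j
    = lam ^ 3 * (6 / 25) * (g6 3 i j + h6 3 i j) := by
  intro i j
  simp only [ptr, hW3, ← Finset.mul_sum, Finset.sum_add_distrib, Finset.sum_sub_distrib]
  rw [show (∑ u, KN (g6 3) (g6 3) i u j u) = ptr (KN (g6 3) (g6 3)) i j from rfl,
      show (∑ u, KN (h6 3) (h6 3) i u j u) = ptr (KN (h6 3) (h6 3)) i j from rfl,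
      show (∑ u, KN (g6 3) (h6 3) i u j u) = ptr (KN (g6 3) (h6 3)) i j from rfl,
      ptr_KN, ptr_KN, ptr_KN, htrg, htrh, hgg i j, hhh i j, hgh i j, hhg i j]
  ring

lemma htrW2 (lam : ℝ) : tr2 (ptr (W2m 3 lam lam)) = (36 / 5) * lam ^ 2 := by
  simp only [tr2, hptrW2]
  simp (config := { decide := true }) only [g6, h6, Fin.sum_univ_six]
  norm_num; ring

lemma htrW3 (lam : ℝ) : tr2 (ptr (W3m 3 lam lam)) = (36 / 25) * lam ^ 3 := by
  simp only [tr2, hptrW3]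
  simp (config := { decide := true }) only [g6, h6, Fin.sum_univ_six]
  norm_num; ring

theorem stmt15 (lam : ℝ) :
    (Em 3 lam lam = fun _ _ => 0) ∧
    L1m 3 lam lam = 0 ∧
    L2m 3 lam lam = -(288 / 25) * lam ^ 3 ∧
    L3m 3 lam lam = (144 / 25) * lam ^ 3 ∧
    L2m 3 lam lam = -2 * L3m 3 lam lam := by
  have hinner : inner2 (Em 3 lam lam) (ptr (W2m 3 lam lam)) = 0 := by
    simp [inner2, hE]
  have hL2 : L2m 3 lam lam = -(288 / 25) * lam ^ 3 := by
    rw [L2m, hinner, hJ, htrW2]; ring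
  have hL3 : L3m 3 lam lam = (144 / 25) * lam ^ 3 := by
    rw [L3m, htrW3]; ring
  refine ⟨?_, ?_, hL2, hL3, ?_⟩
  · funext i j; exact hE lam i j
  · rw [L1m, hinner]; ring
  · rw [hL2, hL3]; ring
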